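/- If ρ and σ are density matrices on a d-dimensional Hilbert space with trace distance D(ρ,σ), then |S(ρ) - S(σ)| ≤ D(ρ,σ)·log d + h(D(ρ,σ)), where h(x) = -x log₂ x - (1-x) log₂(1-x) is the binary entropy (Fannes–Audenaert inequality). -/

import Mathlib

open Matrix
open scoped ComplexOrder

/-- Matrix function via the continuous functional calculus (for Hermitian matrices). -/
noncomputable def mfun {n : Type*} [Fintype n] [DecidableEq n]
    (f : ℝ → ℝ) (A : Matrix n n ℂ) : Matrix n n ℂ := cfc f A

/-- A density matrix: positive semidefinite with unit trace. -/
def IsDensityMatrix {n : Type*} [Fintype n] [DecidableEq n] (ρ : Matrix n n ℂ) : Prop :=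
  ρ.PosSemidef ∧ Matrix.trace ρ = 1

/-- Trace distance `D(ρ,σ) = ½‖ρ-σ‖₁`. -/
noncomputable def traceDist {n : Type*} [Fintype n] [DecidableEq n]
    (ρ σ : Matrix n n ℂ) : ℝ :=
  (1 / 2) * (Matrix.trace (mfun (fun x => |x|) (ρ - σ))).re

/-- Fidelity `F(ρ,σ) = (Tr √(√ρ σ √ρ))²`. -/
noncomputable def fidelity {n : Type*} [Fintype n] [DecidableEq n]
    (ρ σ : Matrix n n ℂ) : ℝ :=
  ((Matrix.trace (mfun Real.sqrt (mfun Real.sqrt ρ * σ * mfun Real.sqrt ρ))).re) ^ 2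

/-- Von Neumann entropy (in bits), `S(ρ) = -Tr[ρ log₂ ρ]`. -/
noncomputable def vnEnt {n : Type*} [Fintype n] [DecidableEq n] (ρ : Matrix n n ℂ) : ℝ :=
  -(Matrix.trace (ρ * mfun (Real.logb 2) ρ)).re

/-- Binary entropy function. -/
noncomputable def binEnt (x : ℝ) : ℝ :=
  -x * Real.logb 2 x - (1 - x) * Real.logb 2 (1 - x)

/-!
Order the eigenvalues of `ρ` and `σ` decreasingly. Both `ρ` and `σ` lie below `σ + (ρ - σ)₊` in
the Loewner order, so by Weyl's monotonicity theorem the ℓ¹ distance between the two ordered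
spectra is at most `‖ρ - σ‖₁ = 2 D(ρ, σ)`. This reduces the claim to Audenaert's inequality for
probability vectors `p, q` at total variation distance at most `T`. There one splits off a common
part `w ≤ min p q` of mass `1 - T`, so that `p = a + w` and `q = b + w` with `a, b` of mass `T`:
subadditivity of `-x log x` gives `H p ≤ H a + H w`, concavity gives `H b + H w - h T ≤ H q`, and
`H a - H b ≤ T log d` because `H a ≤ T log d - T log T ≤ H b + T log d`.
-/

section

open Finset Module Submodule RCLike
open scoped InnerProductSpace MatrixOrder

lemma exists_nonneg_le_sum_eq {ι : Type*} [Fintype ι] {f : ι → ℝ} (hf : ∀ i, 0 ≤ f i) {c : ℝ}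
    (hc : 0 ≤ c) (hcf : c ≤ ∑ i, f i) :
    ∃ w : ι → ℝ, (∀ i, 0 ≤ w i) ∧ (∀ i, w i ≤ f i) ∧ ∑ i, w i = c := by
  have hF : 0 ≤ ∑ i, f i := sum_nonneg fun i _ => hf i
  refine ⟨fun i => c / (∑ j, f j) * f i, fun i => mul_nonneg (div_nonneg hc hF) (hf i),
    fun i => mul_le_of_le_one_left (hf i) (div_le_one_of_le₀ hcf hF), ?_⟩
  rw [← mul_sum, div_mul_cancel_of_imp fun h => le_antisymm (h ▸ hcf) hc]

lemma sum_min_eq {ι : Type*} [Fintype ι] (p q : ι → ℝ) :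
    ∑ i, min (p i) (q i) = (∑ i, p i + ∑ i, q i - ∑ i, |p i - q i|) / 2 := by
  rw [eq_div_iff two_ne_zero, ← sum_add_distrib, ← sum_sub_distrib, sum_mul]
  refine sum_congr rfl fun i _ => ?_
  have := min_add_max (p i) (q i)
  have := max_sub_min_eq_abs (q i) (p i)
  rw [max_comm, min_comm] at this
  linarith

namespace Real

variable {ι : Type*}

lemma negMulLog_add_le {x y : ℝ} (hx : 0 ≤ x) (hy : 0 ≤ y) :
    negMulLog (x + y) ≤ negMulLog x + negMulLog y := by
  rcases hx.eq_or_lt with rfl | hx'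
  · simp
  rcases hy.eq_or_lt with rfl | hy'
  · simp
  simp only [negMulLog, neg_mul, add_mul]
  have := mul_le_mul_of_nonneg_left (log_le_log hx' (le_add_of_nonneg_right hy)) hx
  have := mul_le_mul_of_nonneg_left (log_le_log hy' (le_add_of_nonneg_left hx)) hy
  linarith

lemma negMulLog_sum_le {s : Finset ι} {f : ι → ℝ} (hf : ∀ i ∈ s, 0 ≤ f i) :
    negMulLog (∑ i ∈ s, f i) ≤ ∑ i ∈ s, negMulLog (f i) :=
  le_sum_of_subadditive_on_pred negMulLog (0 ≤ ·) negMulLog_zero.le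
    (fun _ _ hx hy => negMulLog_add_le hx hy) (fun _ _ => add_nonneg) f hf

lemma sum_negMulLog_le [Fintype ι] [Nonempty ι] {f : ι → ℝ} (hf : ∀ i, 0 ≤ f i) :
    ∑ i, negMulLog (f i) ≤ (∑ i, f i) * log (Fintype.card ι) + negMulLog (∑ i, f i) := by
  set d : ℝ := (Fintype.card ι : ℝ)
  have hd : 0 < d := Nat.cast_pos.2 Fintype.card_pos
  have jensen := concaveOn_negMulLog.le_map_sum (t := univ) (w := fun _ => d⁻¹) (p := f)
    (fun _ _ => by positivity) (by simp [d, hd.ne']) (fun i _ => Set.mem_Ici.2 (hf i))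
  simp only [smul_eq_mul, ← mul_sum] at jensen
  rw [negMulLog_mul, negMulLog, log_inv] at jensen
  rw [← mul_le_mul_iff_right₀ (inv_pos.2 hd)]
  linarith

-- With Mathlib's `log 0 = 0`, the case `s = 0 < x` (left side `-∞`) has to be excluded.
lemma negMulLog_add_add_mul_log_le {x y s t : ℝ} (hx : 0 ≤ x) (hy : 0 ≤ y) (hs : 0 ≤ s)
    (ht : 0 ≤ t) (hst : s + t = 1) (hxs : s = 0 → x = 0) (hyt : t = 0 → y = 0) :
    negMulLog x + negMulLog y + x * log s + y * log t ≤ negMulLog (x + y) := by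
  rcases hx.eq_or_lt with rfl | hx'
  · simp [mul_nonpos_of_nonneg_of_nonpos hy (log_nonpos ht (by linarith))]
  rcases hy.eq_or_lt with rfl | hy'
  · simp [mul_nonpos_of_nonneg_of_nonpos hx (log_nonpos hs (by linarith))]
  have hs' : 0 < s := hs.lt_of_ne' fun h => hx'.ne' (hxs h)
  have ht' : 0 < t := ht.lt_of_ne' fun h => hy'.ne' (hyt h)
  have concave := concaveOn_negMulLog.2 (Set.mem_Ici.2 (div_nonneg hx hs))
    (Set.mem_Ici.2 (div_nonneg hy ht)) hs ht hst
  simp only [smul_eq_mul, mul_div_cancel₀ _ hs'.ne', mul_div_cancel₀ _ ht'.ne'] at concave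
  have hxs' : s * negMulLog (x / s) = negMulLog x + x * log s := by
    simp only [negMulLog, log_div hx'.ne' hs'.ne']; field_simp; ring
  have hyt' : t * negMulLog (y / t) = negMulLog y + y * log t := by
    simp only [negMulLog, log_div hy'.ne' ht'.ne']; field_simp; ring
  linarith

lemma sum_negMulLog_add_sub_binEntropy_le [Fintype ι] {x y : ι → ℝ} (hx : ∀ i, 0 ≤ x i)
    (hy : ∀ i, 0 ≤ y i) {s : ℝ} (hxs : ∑ i, x i = s) (hys : ∑ i, y i = 1 - s) :
    ∑ i, negMulLog (x i) + ∑ i, negMulLog (y i) - binEntropy s ≤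
      ∑ i, negMulLog (x i + y i) := by
  have hs : 0 ≤ s := hxs ▸ sum_nonneg fun i _ => hx i
  have ht : 0 ≤ 1 - s := hys ▸ sum_nonneg fun i _ => hy i
  have eq_zero {z : ι → ℝ} (hz : ∀ i, 0 ≤ z i) (h : ∑ i, z i = 0) (i : ι) : z i = 0 :=
    (sum_eq_zero_iff_of_nonneg fun i _ => hz i).1 h i (mem_univ i)
  have pointwise (i : ι) := negMulLog_add_add_mul_log_le (hx i) (hy i) hs ht (by ring)
    (fun h => eq_zero hx (hxs.trans h) i) (fun h => eq_zero hy (hys.trans h) i)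
  have total := sum_le_sum fun i (_ : i ∈ univ) => pointwise i
  simp only [sum_add_distrib, ← sum_mul, hxs, hys] at total
  rw [binEntropy_eq_negMulLog_add_negMulLog_one_sub, negMulLog, negMulLog]
  linarith

theorem sum_negMulLog_sub_sum_negMulLog_le [Fintype ι] {p q : ι → ℝ} (hp : ∀ i, 0 ≤ p i)
    (hq : ∀ i, 0 ≤ q i) (hp1 : ∑ i, p i = 1) (hq1 : ∑ i, q i = 1) {T : ℝ}
    (hT : (∑ i, |p i - q i|) / 2 ≤ T) (hT1 : T ≤ 1) :
    ∑ i, negMulLog (p i) - ∑ i, negMulLog (q i) ≤ T * log (Fintype.card ι) + binEntropy T := by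
  have : Nonempty ι := by
    by_contra h
    simp [not_nonempty_iff.1 h] at hp1
  obtain ⟨w, hw, hwpq, hw1⟩ := exists_nonneg_le_sum_eq (fun i => le_min (hp i) (hq i))
    (sub_nonneg.2 hT1) (by rw [sum_min_eq, hp1, hq1]; linarith)
  have ha (i : ι) : 0 ≤ p i - w i := sub_nonneg.2 ((hwpq i).trans (min_le_left _ _))
  have hb (i : ι) : 0 ≤ q i - w i := sub_nonneg.2 ((hwpq i).trans (min_le_right _ _))
  have ha1 : ∑ i, (p i - w i) = T := by rw [sum_sub_distrib, hp1, hw1]; ring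
  have hb1 : ∑ i, (q i - w i) = T := by rw [sum_sub_distrib, hq1, hw1]; ring
  have upper : ∑ i, negMulLog (p i) ≤ ∑ i, negMulLog (p i - w i) + ∑ i, negMulLog (w i) := by
    rw [← sum_add_distrib]
    gcongr with i
    simpa using negMulLog_add_le (ha i) (hw i)
  have lower := sum_negMulLog_add_sub_binEntropy_le hb hw hb1 (by rw [hw1])
  simp only [sub_add_cancel] at lower
  have ha_le := sum_negMulLog_le ha
  have hb_ge := negMulLog_sum_le fun i (_ : i ∈ univ) => hb i
  rw [ha1] at ha_le
  rw [hb1] at hb_ge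
  linarith

theorem abs_sum_negMulLog_sub_sum_negMulLog_le [Fintype ι] {p q : ι → ℝ} (hp : ∀ i, 0 ≤ p i)
    (hq : ∀ i, 0 ≤ q i) (hp1 : ∑ i, p i = 1) (hq1 : ∑ i, q i = 1) {T : ℝ}
    (hT : (∑ i, |p i - q i|) / 2 ≤ T) (hT1 : T ≤ 1) :
    |∑ i, negMulLog (p i) - ∑ i, negMulLog (q i)| ≤ T * log (Fintype.card ι) + binEntropy T := by
  refine abs_sub_le_iff.2 ⟨sum_negMulLog_sub_sum_negMulLog_le hp hq hp1 hq1 hT hT1,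
    sum_negMulLog_sub_sum_negMulLog_le hq hp hq1 hp1 ?_ hT1⟩
  simpa only [abs_sub_comm] using hT

end Real

lemma LinearIndependent.finrank_span_image {K V ι : Type*} [DivisionRing K] [AddCommGroup V]
    [Module K V] {v : ι → V} (hv : LinearIndependent K v) (s : Finset ι) :
    finrank K (span K (v '' s)) = s.card := by
  rw [Set.image_eq_range]
  exact (finrank_span_eq_card (hv.comp _ Subtype.val_injective)).trans (Fintype.card_coe s)

variable {𝕜 E : Type*} [RCLike 𝕜] [NormedAddCommGroup E] [InnerProductSpace 𝕜 E]

lemma OrthonormalBasis.inner_eq_zero_of_mem_span {ι : Type*} [Fintype ι]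
    (b : OrthonormalBasis ι 𝕜 E) {s : Set ι} {x : E} (hx : x ∈ span 𝕜 (b '' s)) {i : ι}
    (hi : i ∉ s) : ⟪b i, x⟫_𝕜 = 0 := by
  have : span 𝕜 (b '' s) ≤ (𝕜 ∙ b i)ᗮ := by
    refine span_le.2 ?_
    rintro _ ⟨j, hj, rfl⟩
    exact mem_orthogonal_singleton_iff_inner_right.2 (b.inner_eq_zero fun h => hi (h ▸ hj))
  exact mem_orthogonal_singleton_iff_inner_right.1 (this hx)

namespace LinearMap.IsSymmetric

variable [FiniteDimensional 𝕜 E] {T S : E →ₗ[𝕜] E} {n : ℕ} (hn : finrank 𝕜 E = n)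

lemma re_inner_apply_self_eq_sum (hT : T.IsSymmetric) (x : E) :
    re ⟪T x, x⟫_𝕜 = ∑ i, hT.eigenvalues hn i * ‖⟪hT.eigenvectorBasis hn i, x⟫_𝕜‖ ^ 2 := by
  rw [← (hT.eigenvectorBasis hn).sum_inner_mul_inner, map_sum]
  refine sum_congr rfl fun i _ => ?_
  rw [hT, hT.apply_eigenvectorBasis, inner_smul_right, ← inner_conj_symm x, mul_assoc,
    RCLike.conj_mul]
  norm_cast

lemma mul_norm_sq_le_re_inner_apply_self (hT : T.IsSymmetric) {s : Set (Fin n)} {c : ℝ}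
    (hc : ∀ i ∈ s, c ≤ hT.eigenvalues hn i) {x : E}
    (hx : x ∈ span 𝕜 (hT.eigenvectorBasis hn '' s)) :
    c * ‖x‖ ^ 2 ≤ re ⟪T x, x⟫_𝕜 := by
  rw [hT.re_inner_apply_self_eq_sum hn, ← (hT.eigenvectorBasis hn).sum_sq_norm_inner_right,
    mul_sum]
  refine sum_le_sum fun i _ => ?_
  by_cases hi : i ∈ s
  · gcongr
    exact hc i hi
  · simp [(hT.eigenvectorBasis hn).inner_eq_zero_of_mem_span hx hi]

lemma re_inner_apply_self_le_mul_norm_sq (hT : T.IsSymmetric) {s : Set (Fin n)} {c : ℝ}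
    (hc : ∀ i ∈ s, hT.eigenvalues hn i ≤ c) {x : E}
    (hx : x ∈ span 𝕜 (hT.eigenvectorBasis hn '' s)) :
    re ⟪T x, x⟫_𝕜 ≤ c * ‖x‖ ^ 2 := by
  rw [hT.re_inner_apply_self_eq_sum hn, ← (hT.eigenvectorBasis hn).sum_sq_norm_inner_right,
    mul_sum]
  refine sum_le_sum fun i _ => ?_
  by_cases hi : i ∈ s
  · gcongr
    exact hc i hi
  · simp [(hT.eigenvectorBasis hn).inner_eq_zero_of_mem_span hx hi]

/-- **Weyl's monotonicity theorem**. -/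
theorem eigenvalues_le_eigenvalues (hT : T.IsSymmetric) (hS : S.IsSymmetric)
    (hTS : T ≤ S) (k : Fin n) :
    hT.eigenvalues hn k ≤ hS.eigenvalues hn k := by
  -- the top `k + 1` eigenvectors of `T` and the bottom `n - k` of `S` span intersecting subspaces
  set V := span 𝕜 (hT.eigenvectorBasis hn '' ↑(Iic k))
  set W := span 𝕜 (hS.eigenvectorBasis hn '' ↑(Ici k))
  obtain ⟨x, hxV, hxW, hx⟩ : ∃ x ∈ V, x ∈ W ∧ x ≠ 0 := by
    have : ¬ Disjoint V W := fun h => by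
      have := finrank_add_finrank_le_of_disjoint h
      rw [(hT.eigenvectorBasis hn).orthonormal.linearIndependent.finrank_span_image,
        (hS.eigenvectorBasis hn).orthonormal.linearIndependent.finrank_span_image,
        Fin.card_Iic, Fin.card_Ici, hn] at this
      omega
    simpa [disjoint_def] using this
  have hV := hT.mul_norm_sq_le_re_inner_apply_self hn
    (fun i hi => hT.eigenvalues_antitone hn (mem_Iic.1 hi)) hxV
  have hW := hS.re_inner_apply_self_le_mul_norm_sq hn
    (fun i hi => hS.eigenvalues_antitone hn (mem_Ici.1 hi)) hxW
  have hTSx : re ⟪T x, x⟫_𝕜 ≤ re ⟪S x, x⟫_𝕜 := by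
    simpa [inner_sub_left] using hTS.re_inner_nonneg_left x
  exact le_of_mul_le_mul_right ((hV.trans hTSx).trans hW) (by positivity)

end LinearMap.IsSymmetric

lemma abs_eq_two_mul_posPart_sub (a : ℝ) : |a| = 2 * a⁺ - a := by
  linarith [posPart_add_negPart a, posPart_sub_negPart a]

namespace Matrix.IsHermitian

variable {𝕜 : Type*} [RCLike 𝕜] {n : Type*} [Fintype n] [DecidableEq n] {A B : Matrix n n 𝕜}

lemma sum_comp_eigenvalues₀ (hA : A.IsHermitian) (f : ℝ → ℝ) :
    ∑ k, f (hA.eigenvalues₀ k) = ∑ i, f (hA.eigenvalues i) :=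
  (Equiv.sum_comp (Fintype.equivOfCardEq (Fintype.card_fin _)).symm _).symm

lemma trace_cfc (hA : A.IsHermitian) (f : ℝ → ℝ) :
    trace (cfc f A) = ∑ i, (f (hA.eigenvalues i) : 𝕜) := by
  rw [hA.cfc_eq, IsHermitian.cfc, Unitary.conjStarAlgAut_apply, trace_mul_cycle,
    Unitary.coe_star_mul_self, one_mul, trace_diagonal]
  rfl

lemma re_trace_cfc (hA : A.IsHermitian) (f : ℝ → ℝ) :
    re (trace (cfc f A)) = ∑ i, f (hA.eigenvalues i) := by
  simp [hA.trace_cfc]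

lemma re_trace_eq_sum_eigenvalues₀ (hA : A.IsHermitian) :
    re (trace A) = ∑ k, hA.eigenvalues₀ k := by
  simp [hA.sum_comp_eigenvalues₀ fun x => x, hA.trace_eq_sum_eigenvalues]

lemma _root_.Matrix.PosSemidef.eigenvalues₀_nonneg (hA : A.PosSemidef)
    (k : Fin (Fintype.card n)) : 0 ≤ hA.1.eigenvalues₀ k := by
  simpa [IsHermitian.eigenvalues] using
    hA.eigenvalues_nonneg (Fintype.equivOfCardEq (Fintype.card_fin _) k)

theorem eigenvalues₀_le_eigenvalues₀ (hA : A.IsHermitian) (hB : B.IsHermitian) (hAB : A ≤ B)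
    (k : Fin (Fintype.card n)) : hA.eigenvalues₀ k ≤ hB.eigenvalues₀ k := by
  refine LinearMap.IsSymmetric.eigenvalues_le_eigenvalues _ _ _ ?_ k
  rw [LinearMap.le_def, ← map_sub, isPositive_toEuclideanLin_iff]
  exact hAB

theorem sum_abs_eigenvalues₀_sub_le (hA : A.IsHermitian) (hB : B.IsHermitian) :
    ∑ k, |hA.eigenvalues₀ k - hB.eigenvalues₀ k| ≤ ∑ i, |(hA.sub hB).eigenvalues i| := by
  -- both `A` and `B` lie below `B + (A - B)₊`
  have hD := hA.sub hB
  set P := cfc (fun x : ℝ => x⁺) (A - B)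
  have hM : (B + P).IsHermitian := hB.add (cfc_predicate _ _)
  have hAM : A ≤ B + P := by
    rw [← sub_le_iff_le_add']
    calc A - B = cfc (fun x : ℝ => x) (A - B) := (cfc_id' ℝ (A - B) hD).symm
      _ ≤ P := cfc_mono fun x _ => le_posPart x
  have hBM : B ≤ B + P := le_add_of_nonneg_right (cfc_nonneg fun x _ => posPart_nonneg x)
  have pointwise (k : Fin (Fintype.card n)) :
      |hA.eigenvalues₀ k - hB.eigenvalues₀ k| ≤
        2 * hM.eigenvalues₀ k - hA.eigenvalues₀ k - hB.eigenvalues₀ k := by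
    have := hA.eigenvalues₀_le_eigenvalues₀ hM hAM k
    have := hB.eigenvalues₀_le_eigenvalues₀ hM hBM k
    rw [abs_le]
    constructor <;> linarith
  have htrM := hM.re_trace_eq_sum_eigenvalues₀
  have htrA := hA.re_trace_eq_sum_eigenvalues₀
  have htrB := hB.re_trace_eq_sum_eigenvalues₀
  have htrD := hD.re_trace_eq_sum_eigenvalues₀
  have htrP := hD.re_trace_cfc fun x => x⁺
  rw [trace_add, map_add] at htrM
  rw [trace_sub, map_sub, hD.sum_comp_eigenvalues₀ fun x => x] at htrD
  calc ∑ k, |hA.eigenvalues₀ k - hB.eigenvalues₀ k|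
      ≤ ∑ k, (2 * hM.eigenvalues₀ k - hA.eigenvalues₀ k - hB.eigenvalues₀ k) :=
        sum_le_sum fun k _ => pointwise k
    _ = ∑ i, |hD.eigenvalues i| := by
        simp only [abs_eq_two_mul_posPart_sub, sum_sub_distrib, ← mul_sum]
        linarith

end Matrix.IsHermitian

section QuantumEntropy

variable {n : Type*} [Fintype n] [DecidableEq n]

lemma IsDensityMatrix.sum_eigenvalues₀ {ρ : Matrix n n ℂ} (hρ : IsDensityMatrix ρ) :
    ∑ k, hρ.1.1.eigenvalues₀ k = 1 := by
  rw [← hρ.1.1.re_trace_eq_sum_eigenvalues₀, hρ.2, one_re]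

lemma vnEnt_eq_sum_negMulLog {A : Matrix n n ℂ} (hA : A.IsHermitian) :
    vnEnt A = (∑ i, Real.negMulLog (hA.eigenvalues i)) / Real.log 2 := by
  have hmul : A * cfc (Real.logb 2) A = cfc (fun x => x * Real.logb 2 x) A := by
    rw [cfc_mul (fun x => x) _ A (hg := A.finite_real_spectrum.continuousOn _), cfc_id' ℝ A]
  rw [vnEnt, mfun, hmul, ← re_to_complex, hA.re_trace_cfc, ← sum_neg_distrib, sum_div]
  refine sum_congr rfl fun i _ => ?_
  rw [Real.negMulLog, Real.logb]
  ring

lemma traceDist_eq_sum_abs {A B : Matrix n n ℂ} (hA : A.IsHermitian) (hB : B.IsHermitian) :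
    traceDist A B = (∑ i, |(hA.sub hB).eigenvalues i|) / 2 := by
  rw [traceDist, mfun, ← re_to_complex, (hA.sub hB).re_trace_cfc]
  ring

lemma traceDist_le_one {ρ σ : Matrix n n ℂ} (hρ : IsDensityMatrix ρ) (hσ : IsDensityMatrix σ) :
    traceDist ρ σ ≤ 1 := by
  have hΔ := hρ.1.1.sub hσ.1.1
  have htr : ∑ k, hΔ.eigenvalues₀ k = 0 := by
    rw [← hΔ.re_trace_eq_sum_eigenvalues₀, trace_sub, hρ.2, hσ.2, sub_self, zero_re]
  have hΔρ : ρ - σ ≤ ρ := sub_le_self ρ (nonneg_iff_posSemidef.2 hσ.1)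
  have pointwise (k : Fin (Fintype.card n)) : (hΔ.eigenvalues₀ k)⁺ ≤ hρ.1.1.eigenvalues₀ k :=
    sup_le (hΔ.eigenvalues₀_le_eigenvalues₀ hρ.1.1 hΔρ k) (hρ.1.eigenvalues₀_nonneg k)
  calc traceDist ρ σ = ∑ k, (hΔ.eigenvalues₀ k)⁺ := by
        rw [traceDist_eq_sum_abs hρ.1.1 hσ.1.1, ← hΔ.sum_comp_eigenvalues₀ fun x => |x|]
        simp only [abs_eq_two_mul_posPart_sub, sum_sub_distrib, ← mul_sum, htr]
        ring
    _ ≤ ∑ k, hρ.1.1.eigenvalues₀ k := sum_le_sum fun k _ => pointwise k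
    _ = 1 := hρ.sum_eigenvalues₀

lemma binEnt_eq_binEntropy_div (x : ℝ) : binEnt x = Real.binEntropy x / Real.log 2 := by
  rw [binEnt, Real.binEntropy_eq_negMulLog_add_negMulLog_one_sub, Real.negMulLog,
    Real.negMulLog, Real.logb, Real.logb]
  ring

end QuantumEntropy

end

/-- Fannes–Audenaert inequality: for density matrices `ρ, σ` on a `d`-dimensional Hilbert
space, `|S(ρ) - S(σ)| ≤ D(ρ,σ)·log₂ d + h(D(ρ,σ))`. -/
theorem fannes_audenaert {n : Type*} [Fintype n] [DecidableEq n]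
    (ρ σ : Matrix n n ℂ) (hρ : IsDensityMatrix ρ) (hσ : IsDensityMatrix σ) :
    |vnEnt ρ - vnEnt σ| ≤
      traceDist ρ σ * Real.logb 2 (Fintype.card n) + binEnt (traceDist ρ σ) := by
  have hρH := hρ.1.1
  have hσH := hσ.1.1
  have hTV : (∑ k, |hρH.eigenvalues₀ k - hσH.eigenvalues₀ k|) / 2 ≤ traceDist ρ σ := by
    rw [traceDist_eq_sum_abs hρH hσH]
    gcongr
    exact hρH.sum_abs_eigenvalues₀_sub_le hσH
  have classical := Real.abs_sum_negMulLog_sub_sum_negMulLog_le hρ.1.eigenvalues₀_nonneg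
    hσ.1.eigenvalues₀_nonneg hρ.sum_eigenvalues₀ hσ.sum_eigenvalues₀ hTV (traceDist_le_one hρ hσ)
  rw [Fintype.card_fin, hρH.sum_comp_eigenvalues₀, hσH.sum_comp_eigenvalues₀] at classical
  have hlog2 : 0 < Real.log 2 := Real.log_pos one_lt_two
  rw [vnEnt_eq_sum_negMulLog hρH, vnEnt_eq_sum_negMulLog hσH, binEnt_eq_binEntropy_div, ← sub_div,
    abs_div, abs_of_pos hlog2, Real.logb, mul_div_assoc', ← add_div]
  exact div_le_div_of_nonneg_right classical hlog2.le
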